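/- arXiv:1311.5510 — 4 statements merged into one kernel-verified Lean document; each statement's English description precedes it below -/
import Mathlib

section
/- Every strongly connected directed multigraph $\Gamma$ with at least two vertices, in which every non-distinguished vertex has in-degree at least 2 and out-degree at least 2, contains a redundant edge, i.e., an edge whose removal leaves the graph strongly connected. -/
/-- A directed multigraph on vertex type `V` with edge type `E`. -/
structure Multidigraph (V E : Type*) where
  src : E → V
  tgt : E → V

/-- Reachability in `G` using only edges in the set `S`. -/
def Multidigraph.Reach {V E : Type*} (G : Multidigraph V E) (S : Set E) (u v : V) : Prop :=
  Relation.ReflTransGen (fun a b => ∃ e ∈ S, G.src e = a ∧ G.tgt e = b) u v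

/-- Strong connectivity of the subgraph of `G` with edge set `S`. -/
def Multidigraph.StronglyConnectedOn {V E : Type*} (G : Multidigraph V E) (S : Set E) : Prop :=
  ∀ u v : V, G.Reach S u v

def Multidigraph.indeg {V E : Type*} [Fintype E] [DecidableEq V]
    (G : Multidigraph V E) (v : V) : ℕ :=
  (Finset.univ.filter (fun e => G.tgt e = v)).card

def Multidigraph.outdeg {V E : Type*} [Fintype E] [DecidableEq V]
    (G : Multidigraph V E) (v : V) : ℕ :=
  (Finset.univ.filter (fun e => G.src e = v)).card

/-!
Root everything at one vertex. A greedily grown spanning in-tree and out-tree have fewer than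
`|V|` edges each and together keep the graph strongly connected, so some `2(|V| - 1)` edges
suffice. Counting out-degrees, the degree conditions force at least `2(|V| - 1) + 1` edges, so
some edge lies outside both trees, and it is redundant.
-/

namespace Multidigraph

open Finset

variable {V E : Type*} {G : Multidigraph V E}

theorem Reach.mono {S T : Set E} (hST : S ⊆ T) {u v : V} (h : G.Reach S u v) :
    G.Reach T u v :=
  Relation.ReflTransGen.mono (fun _ _ ⟨e, he, hs, ht⟩ => ⟨e, hST he, hs, ht⟩) u v h

theorem Reach.exists_edge_into {S : Set E} {A : Set V} {u v : V} (h : G.Reach S u v)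
    (hu : u ∉ A) (hv : v ∈ A) : ∃ e ∈ S, G.src e ∉ A ∧ G.tgt e ∈ A := by
  induction h using Relation.ReflTransGen.head_induction_on with
  | refl => exact absurd hv hu
  | head step _ ih =>
    obtain ⟨e, he, rfl, rfl⟩ := step
    by_cases hc : G.tgt e ∈ A
    · exact ⟨e, he, hu, hc⟩
    · exact ih hc

theorem StronglyConnectedOn.of_reach_root {S : Set E} (b : V) (hto : ∀ v, G.Reach S v b)
    (hfrom : ∀ v, G.Reach S b v) : G.StronglyConnectedOn S :=
  fun u v => Relation.ReflTransGen.trans (hto u) (hfrom v)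

variable (G)

def reverse : Multidigraph V E := ⟨G.tgt, G.src⟩

theorem reach_reverse {S : Set E} {u v : V} : G.reverse.Reach S u v ↔ G.Reach S v u := by
  rw [Reach, Reach, ← Relation.reflTransGen_swap]
  unfold reverse Function.swap
  simp only [and_comm]

theorem exists_in_arborescence [Fintype V] [Fintype E] {S : Set E} {b : V}
    (hS : ∀ v, G.Reach S v b) :
    ∃ T : Finset E, ↑T ⊆ S ∧ #T < Fintype.card V ∧ ∀ v, G.Reach T v b := by
  classical
  let R : Finset E → Finset V := fun T => {v | G.Reach T v b}
  have hb : ∀ T, b ∈ R T := fun T => by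
    simp only [R, mem_filter, mem_univ, true_and]
    exact Relation.ReflTransGen.refl
  -- Among edge sets with fewer edges than vertices reaching `b`, take one reaching the most
  -- vertices; an edge of `S` entering that vertex set would enlarge it.
  obtain ⟨T, hT, hmax⟩ :=
    ({T | ↑T ⊆ S ∧ #T < #(R T)} : Finset (Finset E)).exists_max_image (fun T => #(R T))
      ⟨∅, by simpa using card_pos.mpr ⟨b, hb ∅⟩⟩
  simp only [mem_filter, mem_univ, true_and] at hT hmax
  have hall : ∀ v, G.Reach T v b := by
    by_contra! ⟨v, hv⟩
    obtain ⟨e, heS, hsrc, htgt⟩ :=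
      (hS v).exists_edge_into (A := {w | G.Reach T w b}) hv Relation.ReflTransGen.refl
    have hgrow : insert (G.src e) (R T) ⊆ R (insert e T) := by
      intro w hw
      simp only [R, mem_insert, mem_filter, mem_univ, true_and] at hw ⊢
      rcases hw with rfl | hw
      · exact Relation.ReflTransGen.head ⟨e, by simp, rfl, rfl⟩ (htgt.mono (by simp))
      · exact hw.mono (by simp)
    have hcard := card_le_card hgrow
    rw [card_insert_of_notMem (by simpa [R] using hsrc)] at hcard
    have := hmax (insert e T) ⟨by simp [Set.insert_subset_iff, heS, hT.1], by
      have := card_insert_le e T; omega⟩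
    omega
  exact ⟨T, hT.1, hT.2.trans_le (card_le_univ _), hall⟩

theorem exists_out_arborescence [Fintype V] [Fintype E] {S : Set E} {b : V}
    (hS : ∀ v, G.Reach S b v) :
    ∃ T : Finset E, ↑T ⊆ S ∧ #T < Fintype.card V ∧ ∀ v, G.Reach T b v := by
  simpa only [reach_reverse] using G.reverse.exists_in_arborescence (by simpa [reach_reverse])

theorem exists_redundant_edge_of_card_lt [Fintype V] [Fintype E]
    (hsc : G.StronglyConnectedOn Set.univ) (hE : 2 * (Fintype.card V - 1) < Fintype.card E) :
    ∃ e : E, G.StronglyConnectedOn {e' | e' ≠ e} := by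
  classical
  obtain ⟨e₀⟩ : Nonempty E := Fintype.card_pos_iff.mp (by omega)
  obtain ⟨Tin, -, hTin, hto⟩ := G.exists_in_arborescence fun v => hsc v (G.src e₀)
  obtain ⟨Tout, -, hTout, hfrom⟩ := G.exists_out_arborescence fun v => hsc (G.src e₀) v
  obtain ⟨e, he⟩ : ∃ e, e ∉ Tin ∪ Tout := by
    by_contra! h
    have := (card_le_card (s := univ) fun e _ => h e).trans (card_union_le Tin Tout)
    rw [card_univ] at this
    omega
  have hsub : ∀ T : Finset E, T ⊆ Tin ∪ Tout → (T : Set E) ⊆ {e' | e' ≠ e} :=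
    fun T hT e' he' => by rintro rfl; exact he (hT he')
  exact ⟨e, .of_reach_root (G.src e₀) (fun v => (hto v).mono (hsub _ subset_union_left))
    (fun v => (hfrom v).mono (hsub _ subset_union_right))⟩

theorem card_eq_sum_outdeg [Fintype V] [Fintype E] [DecidableEq V] :
    Fintype.card E = ∑ v, G.outdeg v := by
  rw [← card_univ]
  exact card_eq_sum_card_fiberwise fun e _ => mem_univ (G.src e)

theorem two_mul_card_sub_one_lt_card [Fintype V] [Fintype E] [DecidableEq V] {b : V}
    (hb : 0 < G.outdeg b) (hdeg : ∀ v, v ≠ b → 2 ≤ G.outdeg v) :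
    2 * (Fintype.card V - 1) < Fintype.card E := by
  have hrest : #(univ.erase b) • 2 ≤ ∑ v ∈ univ.erase b, G.outdeg v :=
    card_nsmul_le_sum _ _ _ fun v hv => hdeg v (mem_erase.mp hv).1
  rw [card_erase_of_mem (mem_univ b), card_univ, smul_eq_mul] at hrest
  rw [G.card_eq_sum_outdeg, ← add_sum_erase univ G.outdeg (mem_univ b)]
  omega

theorem outdeg_pos_of_reach [Fintype E] [DecidableEq V] {S : Set E} {u v : V}
    (h : G.Reach S u v) (huv : u ≠ v) : 0 < G.outdeg u := by
  obtain rfl | ⟨_, ⟨e, -, he, -⟩, -⟩ := h.cases_head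
  · exact absurd rfl huv
  · exact card_pos.mpr ⟨e, by simpa using he⟩

end Multidigraph

/-- Every strongly connected pointed multidigraph with at least two vertices, all of whose
non-distinguished vertices have in- and out-degree at least 2, has a redundant edge. -/
theorem exists_redundant_edge {V E : Type*} [Fintype V] [Fintype E] [DecidableEq V]
    (G : Multidigraph V E) (b : V)
    (hV : 2 ≤ Fintype.card V)
    (hstable : ∀ v : V, v ≠ b → 2 ≤ G.indeg v ∧ 2 ≤ G.outdeg v)
    (hsc : G.StronglyConnectedOn Set.univ) :
    ∃ e : E, G.StronglyConnectedOn {e' | e' ≠ e} := by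
  obtain ⟨v, hv⟩ := Fintype.exists_ne_of_one_lt_card hV b
  have hb : 0 < G.outdeg b := G.outdeg_pos_of_reach (hsc b v) hv.symm
  exact G.exists_redundant_edge_of_card_lt hsc
    (G.two_mul_card_sub_one_lt_card hb fun w hw => (hstable w hw).2)
end

section
/- Let $\Gamma$ be a pointed directed multigraph with no loops at the distinguished vertex $\bullet$ and $\deg^+(\bullet) = \deg^-(\bullet) = m$. For any graph $G$ and pointed graph $\Gamma$, the number of complete pairings $P$ of the $m$ inward with the $m$ outward loose ends (obtained by deleting $\bullet$) such that the resulting graph $G_P$ is isomorphic to $G$, divided by $|\mathrm{Aut}(\Gamma)|$, equals the number of edge-cuttings $C$ of $G$ with $\Gamma_C \cong \Gamma$, divided by $|\mathrm{Aut}(G)|$. -/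
/-- An isomorphism of directed multigraphs. -/
structure MDIso {V E V' E' : Type*} (G : Multidigraph V E) (H : Multidigraph V' E') where
  onV : V ≃ V'
  onE : E ≃ E'
  map_src : ∀ e, H.src (onE e) = onV (G.src e)
  map_tgt : ∀ e, H.tgt (onE e) = onV (G.tgt e)

/-- An isomorphism of pointed directed multigraphs (sending distinguished vertex to
distinguished vertex). -/
structure PMDIso {V E V' E' : Type*} (G : Multidigraph V E) (b : V)
    (H : Multidigraph V' E') (b' : V') extends MDIso G H where
  fix : onV b = b'

/-- Given a pointed graph `Γ` with no loops at the distinguished vertex `b`, removing `b`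
leaves loose ends: each edge `u → b` gives an outward loose end and each edge `b → v` an
inward loose end.  A complete pairing `P` of outward with inward loose ends produces the
graph `G_P` on the ordinary vertices, whose edges are the edges of `Γ` missing `b` together
with one new edge `src e → tgt (P e)` for each edge `e : u → b`. -/
def pairingGraph {W F : Type*} (Γ : Multidigraph W F) (b : W)
    (hnl : ∀ e, ¬ (Γ.src e = b ∧ Γ.tgt e = b))
    (P : {e : F // Γ.tgt e = b} ≃ {e : F // Γ.src e = b}) :
    Multidigraph {v : W // v ≠ b}
      ({e : F // Γ.src e ≠ b ∧ Γ.tgt e ≠ b} ⊕ {e : F // Γ.tgt e = b}) where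
  src x := match x with
    | .inl e => ⟨Γ.src e.val, e.2.1⟩
    | .inr o => ⟨Γ.src o.val, fun h => hnl o.val ⟨h, o.2⟩⟩
  tgt x := match x with
    | .inl e => ⟨Γ.tgt e.val, e.2.2⟩
    | .inr o => ⟨Γ.tgt (P o).val, fun h => hnl (P o).val ⟨(P o).2, h⟩⟩

/-- Given a graph `G` and an edge-cutting `C` (a set of edges of `G`), the pointed graph
`Γ_C` is obtained by cutting each edge of `C` in two and joining all the loose ends to a new
distinguished vertex `•` (represented by `none`). -/
def cutGraph {V E : Type*} (G : Multidigraph V E) (C : Set E) :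
    Multidigraph (Option V) ({e : E // e ∉ C} ⊕ ({e : E // e ∈ C} ⊕ {e : E // e ∈ C})) where
  src x := match x with
    | .inl e => some (G.src e.val)
    | .inr (.inl e) => some (G.src e.val)
    | .inr (.inr _) => none
  tgt x := match x with
    | .inl e => some (G.tgt e.val)
    | .inr (.inl _) => none
    | .inr (.inr e) => some (G.tgt e.val)

/-! Cross-multiplied, the identity compares the sizes of two sets of pairs. The pairs
`(P, φ)` with `φ : G_P ≅ G` form, over each admissible `P`, a torsor under `Aut G`, and the
pairs `(C, ψ)` with `ψ : Γ_C ≅ Γ` form, over each admissible `C`, a torsor under `Aut Γ`; so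
it suffices to put the two sets of pairs in bijection. Given `ψ`, the edges of `Γ` split by their
incidence with `•` into the images of the uncut edges of `G` and of the outward and inward
halves of the cut ones; matching the two halves of each cut edge is a pairing `P`, and `ψ`
restricts to `G_P ≅ G`. Conversely, `φ : G_P ≅ G` cuts `G` along the images of the edges of
`G_P` created by `P`. -/

namespace MDIso

variable {V E V' E' V'' E'' : Type*} {G : Multidigraph V E} {H : Multidigraph V' E'}
  {K : Multidigraph V'' E''}

@[ext]
theorem ext {i j : MDIso G H} (hV : i.onV = j.onV) (hE : i.onE = j.onE) : i = j := by
  cases i; cases j; cases hV; cases hE; rfl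

def refl (G : Multidigraph V E) : MDIso G G :=
  ⟨.refl V, .refl E, fun _ => rfl, fun _ => rfl⟩

def symm (i : MDIso G H) : MDIso H G where
  onV := i.onV.symm
  onE := i.onE.symm
  map_src e := by rw [Equiv.eq_symm_apply, ← i.map_src, Equiv.apply_symm_apply]
  map_tgt e := by rw [Equiv.eq_symm_apply, ← i.map_tgt, Equiv.apply_symm_apply]

def trans (i : MDIso G H) (j : MDIso H K) : MDIso G K where
  onV := i.onV.trans j.onV
  onE := i.onE.trans j.onE
  map_src e := by simp [j.map_src, i.map_src]
  map_tgt e := by simp [j.map_tgt, i.map_tgt]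

instance : Nonempty (MDIso G G) := ⟨refl G⟩

instance [Finite V] [Finite E] [Finite V'] [Finite E'] : Finite (MDIso G H) :=
  Finite.of_injective (fun i => (i.onV, i.onE)) fun _ _ h => ext (congrArg Prod.fst h)
    (congrArg Prod.snd h)

def equivAut (i : MDIso H G) : MDIso H G ≃ MDIso G G where
  toFun j := i.symm.trans j
  invFun j := i.trans j
  left_inv j := by ext <;> simp [symm, trans]
  right_inv j := by ext <;> simp [symm, trans]

end MDIso

namespace PMDIso

variable {V E V' E' V'' E'' : Type*} {G : Multidigraph V E} {H : Multidigraph V' E'}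
  {K : Multidigraph V'' E''} {a : V} {b : V'} {c : V''}

@[ext]
theorem ext {i j : PMDIso G a H b} (hV : i.onV = j.onV) (hE : i.onE = j.onE) : i = j := by
  cases i; cases j; cases MDIso.ext hV hE; rfl

def refl (G : Multidigraph V E) (a : V) : PMDIso G a G a := ⟨.refl G, rfl⟩

def symm (i : PMDIso G a H b) : PMDIso H b G a :=
  ⟨i.toMDIso.symm, by simp [MDIso.symm, ← i.fix]⟩

def trans (i : PMDIso G a H b) (j : PMDIso H b K c) : PMDIso G a K c :=
  ⟨i.toMDIso.trans j.toMDIso, by simp [MDIso.trans, i.fix, j.fix]⟩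

instance : Nonempty (PMDIso G a G a) := ⟨refl G a⟩

instance [Finite V] [Finite E] [Finite V'] [Finite E'] : Finite (PMDIso G a H b) :=
  Finite.of_injective toMDIso fun _ _ h => ext (congrArg MDIso.onV h) (congrArg MDIso.onE h)

def equivAut (i : PMDIso H b G a) : PMDIso H b G a ≃ PMDIso G a G a where
  toFun j := i.symm.trans j
  invFun j := i.trans j
  left_inv j := by ext <;> simp [symm, trans, MDIso.symm, MDIso.trans]
  right_inv j := by ext <;> simp [symm, trans, MDIso.symm, MDIso.trans]

end PMDIso

theorem Nat.card_sigma_of_equiv_of_nonempty {ι A : Type*} {T : ι → Type*}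
    (e : ∀ i, Nonempty (T i) → (T i ≃ A)) :
    Nat.card (Σ i, T i) = Nat.card {i // Nonempty (T i)} * Nat.card A := by
  rw [← Nat.card_prod]
  exact Nat.card_congr
    { toFun := fun x => (⟨x.1, ⟨x.2⟩⟩, e x.1 ⟨x.2⟩ x.2)
      invFun := fun p => ⟨p.1.1, (e p.1.1 p.1.2).symm p.2⟩
      left_inv := fun _ => by simp
      right_inv := fun _ => by simp }

open Function

namespace Multidigraph

variable {W F : Type*} (Γ : Multidigraph W F) (b : W)

open scoped Classical in
noncomputable def incidenceSumEquiv (hnl : ∀ e, ¬ (Γ.src e = b ∧ Γ.tgt e = b)) :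
    {e : F // Γ.src e ≠ b ∧ Γ.tgt e ≠ b} ⊕
      ({e : F // Γ.tgt e = b} ⊕ {e : F // Γ.src e = b}) ≃ F where
  toFun := Sum.elim Subtype.val (Sum.elim Subtype.val Subtype.val)
  invFun e :=
    if hs : Γ.src e = b then .inr (.inr ⟨e, hs⟩)
    else if ht : Γ.tgt e = b then .inr (.inl ⟨e, ht⟩) else .inl ⟨e, hs, ht⟩
  left_inv := by
    rintro (⟨e, hs, ht⟩ | ⟨e, ht⟩ | ⟨e, hs⟩)
    · simp [hs, ht]
    · have hs : Γ.src e ≠ b := fun hs => hnl e ⟨hs, ht⟩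
      simp [hs, ht]
    · simp [hs]
  right_inv e := by
    by_cases hs : Γ.src e = b <;> by_cases ht : Γ.tgt e = b <;> simp [hs, ht]

end Multidigraph

section CutAndPair

open Multidigraph

variable {V E W F : Type*} {G : Multidigraph V E} {Γ : Multidigraph W F} {b : W}

namespace PMDIso

variable {C : Set E}

theorem onV_some_ne (ψ : PMDIso (cutGraph G C) none Γ b) (v : V) : ψ.onV (some v) ≠ b :=
  fun h => Option.some_ne_none v (ψ.onV.injective (h.trans ψ.fix.symm))

theorem not_loop_at (ψ : PMDIso (cutGraph G C) none Γ b) (f : F) :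
    ¬ (Γ.src f = b ∧ Γ.tgt f = b) := by
  obtain ⟨x, rfl⟩ := ψ.onE.surjective f
  rw [ψ.map_src, ψ.map_tgt]
  rcases x with _ | _ | _
  exacts [fun h => ψ.onV_some_ne _ h.1, fun h => ψ.onV_some_ne _ h.1,
    fun h => ψ.onV_some_ne _ h.2]

variable (ψ : PMDIso (cutGraph G C) none Γ b)

def uncutEdge (e : {e // e ∉ C}) : {f : F // Γ.src f ≠ b ∧ Γ.tgt f ≠ b} :=
  ⟨ψ.onE (.inl e), (ψ.map_src _).trans_ne (ψ.onV_some_ne _),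
    (ψ.map_tgt _).trans_ne (ψ.onV_some_ne _)⟩

def outwardEnd (e : {e // e ∈ C}) : {f : F // Γ.tgt f = b} :=
  ⟨ψ.onE (.inr (.inl e)), (ψ.map_tgt _).trans ψ.fix⟩

def inwardEnd (e : {e // e ∈ C}) : {f : F // Γ.src f = b} :=
  ⟨ψ.onE (.inr (.inr e)), (ψ.map_src _).trans ψ.fix⟩

theorem bijective_uncutEdge_outwardEnd_inwardEnd :
    Bijective ψ.uncutEdge ∧ Bijective ψ.outwardEnd ∧ Bijective ψ.inwardEnd := by
  have h : Sum.map ψ.uncutEdge (Sum.map ψ.outwardEnd ψ.inwardEnd) =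
      (incidenceSumEquiv Γ b ψ.not_loop_at).symm ∘ ψ.onE := by
    funext x
    rw [comp_apply, Equiv.eq_symm_apply]
    rcases x with _ | _ | _ <;> rfl
  have hbij := h ▸ (incidenceSumEquiv Γ b ψ.not_loop_at).symm.bijective.comp ψ.onE.bijective
  simpa only [Sum.map_bijective] using hbij

noncomputable def uncutEquiv : {e // e ∉ C} ≃ {f : F // Γ.src f ≠ b ∧ Γ.tgt f ≠ b} :=
  .ofBijective _ ψ.bijective_uncutEdge_outwardEnd_inwardEnd.1

noncomputable def outwardEquiv : {e // e ∈ C} ≃ {f : F // Γ.tgt f = b} :=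
  .ofBijective _ ψ.bijective_uncutEdge_outwardEnd_inwardEnd.2.1

noncomputable def inwardEquiv : {e // e ∈ C} ≃ {f : F // Γ.src f = b} :=
  .ofBijective _ ψ.bijective_uncutEdge_outwardEnd_inwardEnd.2.2

noncomputable def pairing : {f : F // Γ.tgt f = b} ≃ {f : F // Γ.src f = b} :=
  ψ.outwardEquiv.symm.trans ψ.inwardEquiv

theorem pairing_outwardEquiv (e : {e // e ∈ C}) :
    ψ.pairing (ψ.outwardEquiv e) = ψ.inwardEquiv e :=
  congrArg ψ.inwardEquiv (ψ.outwardEquiv.symm_apply_apply e)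

open scoped Classical in
noncomputable def vertexEquiv : {w // w ≠ b} ≃ V :=
  (Equiv.optionSubtype b ⟨ψ.onV, ψ.fix⟩).symm

theorem vertexEquiv_eq {w : W} (hw : w ≠ b) {v : V} (h : w = ψ.onV (some v)) :
    ψ.vertexEquiv ⟨w, hw⟩ = v := by
  subst h
  rw [vertexEquiv, Equiv.symm_apply_eq]
  rfl

open scoped Classical in
noncomputable def edgeEquiv :
    {f : F // Γ.src f ≠ b ∧ Γ.tgt f ≠ b} ⊕ {f : F // Γ.tgt f = b} ≃ E :=
  (ψ.uncutEquiv.sumCongr ψ.outwardEquiv).symm.trans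
    ((Equiv.sumComm _ _).trans (Equiv.sumCompl (· ∈ C)))

theorem edgeEquiv_inl_uncutEquiv (e : {e // e ∉ C}) :
    ψ.edgeEquiv (.inl (ψ.uncutEquiv e)) = e := by
  simp [edgeEquiv]

theorem edgeEquiv_inr_outwardEquiv (e : {e // e ∈ C}) :
    ψ.edgeEquiv (.inr (ψ.outwardEquiv e)) = e := by
  simp [edgeEquiv]

theorem edgeEquiv_symm_of_notMem {e : E} (he : e ∉ C) :
    ψ.edgeEquiv.symm e = .inl (ψ.uncutEquiv ⟨e, he⟩) := by
  rw [Equiv.symm_apply_eq, edgeEquiv_inl_uncutEquiv]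

theorem edgeEquiv_symm_of_mem {e : E} (he : e ∈ C) :
    ψ.edgeEquiv.symm e = .inr (ψ.outwardEquiv ⟨e, he⟩) := by
  rw [Equiv.symm_apply_eq, edgeEquiv_inr_outwardEquiv]

theorem isRight_edgeEquiv_symm (e : E) : (ψ.edgeEquiv.symm e).isRight ↔ e ∈ C := by
  by_cases he : e ∈ C
  · simp [ψ.edgeEquiv_symm_of_mem he, he]
  · simp [ψ.edgeEquiv_symm_of_notMem he, he]

noncomputable def toPairingIso : MDIso (pairingGraph Γ b ψ.not_loop_at ψ.pairing) G where
  onV := ψ.vertexEquiv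
  onE := ψ.edgeEquiv
  map_src := by
    rintro (f | o)
    · obtain ⟨e, rfl⟩ := ψ.uncutEquiv.surjective f
      rw [edgeEquiv_inl_uncutEquiv]
      exact (ψ.vertexEquiv_eq _ (ψ.map_src (.inl e))).symm
    · obtain ⟨e, rfl⟩ := ψ.outwardEquiv.surjective o
      rw [edgeEquiv_inr_outwardEquiv]
      exact (ψ.vertexEquiv_eq _ (ψ.map_src (.inr (.inl e)))).symm
  map_tgt := by
    rintro (f | o)
    · obtain ⟨e, rfl⟩ := ψ.uncutEquiv.surjective f
      rw [edgeEquiv_inl_uncutEquiv]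
      exact (ψ.vertexEquiv_eq _ (ψ.map_tgt (.inl e))).symm
    · obtain ⟨e, rfl⟩ := ψ.outwardEquiv.surjective o
      rw [edgeEquiv_inr_outwardEquiv]
      refine (ψ.vertexEquiv_eq _ ?_).symm
      show Γ.tgt (ψ.pairing (ψ.outwardEquiv e)).val = _
      rw [pairing_outwardEquiv]
      exact ψ.map_tgt (.inr (.inr e))

end PMDIso

variable {hnl : ∀ e, ¬ (Γ.src e = b ∧ Γ.tgt e = b)}

namespace MDIso

variable {P : {e : F // Γ.tgt e = b} ≃ {e : F // Γ.src e = b}}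
  (φ : MDIso (pairingGraph Γ b hnl P) G)

def cutSet : Set E := {e | (φ.onE.symm e).isRight}

def uncutEquiv : {e // e ∉ φ.cutSet} ≃ {f : F // Γ.src f ≠ b ∧ Γ.tgt f ≠ b} :=
  (φ.onE.symm.subtypeEquiv fun _ => Sum.not_isRight).trans Equiv.sumIsLeft

def outwardEquiv : {e // e ∈ φ.cutSet} ≃ {f : F // Γ.tgt f = b} :=
  (φ.onE.symm.subtypeEquiv fun _ => Iff.rfl).trans Equiv.sumIsRight

theorem onE_inl_uncutEquiv (e : {e // e ∉ φ.cutSet}) :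
    φ.onE (.inl (φ.uncutEquiv e)) = e := by
  rw [← Equiv.eq_symm_apply]
  exact Sum.inl_getLeft _ _

theorem onE_inr_outwardEquiv (e : {e // e ∈ φ.cutSet}) :
    φ.onE (.inr (φ.outwardEquiv e)) = e := by
  rw [← Equiv.eq_symm_apply]
  exact Sum.inr_getRight _ _

open scoped Classical in
noncomputable def toCutIso : PMDIso (cutGraph G φ.cutSet) none Γ b where
  onV := (Equiv.optionSubtype b |>.symm φ.onV.symm).1
  onE := (φ.uncutEquiv.sumCongr (φ.outwardEquiv.sumCongr (φ.outwardEquiv.trans P))).trans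
    (incidenceSumEquiv Γ b hnl)
  fix := (Equiv.optionSubtype b |>.symm φ.onV.symm).2
  map_src := by
    rintro (e | e | e)
    · show Γ.src (φ.uncutEquiv e).val = (φ.onV.symm (G.src e)).val
      rw [← φ.onE_inl_uncutEquiv e, φ.map_src, Equiv.symm_apply_apply]
      rfl
    · show Γ.src (φ.outwardEquiv e).val = (φ.onV.symm (G.src e)).val
      rw [← φ.onE_inr_outwardEquiv e, φ.map_src, Equiv.symm_apply_apply]
      rfl
    · exact (P (φ.outwardEquiv e)).2
  map_tgt := by
    rintro (e | e | e)
    · show Γ.tgt (φ.uncutEquiv e).val = (φ.onV.symm (G.tgt e)).val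
      rw [← φ.onE_inl_uncutEquiv e, φ.map_tgt, Equiv.symm_apply_apply]
      rfl
    · exact (φ.outwardEquiv e).2
    · show Γ.tgt (P (φ.outwardEquiv e)).val = (φ.onV.symm (G.tgt e)).val
      rw [← φ.onE_inr_outwardEquiv e, φ.map_tgt, Equiv.symm_apply_apply]
      rfl

end MDIso

theorem sigma_pairingIso_ext {x y : Σ P, MDIso (pairingGraph Γ b hnl P) G} (hP : x.1 = y.1)
    (hV : x.2.onV = y.2.onV) (hE : x.2.onE = y.2.onE) : x = y := by
  obtain ⟨P, φ⟩ := x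
  obtain ⟨P', φ'⟩ := y
  subst hP
  exact congrArg _ (MDIso.ext hV hE)

variable (hnl) in
noncomputable def pairingOfCut (x : Σ C : Set E, PMDIso (cutGraph G C) none Γ b) :
    Σ P, MDIso (pairingGraph Γ b hnl P) G :=
  ⟨x.2.pairing, x.2.toPairingIso⟩

noncomputable def cutOfPairing (y : Σ P, MDIso (pairingGraph Γ b hnl P) G) :
    Σ C : Set E, PMDIso (cutGraph G C) none Γ b :=
  ⟨y.2.cutSet, y.2.toCutIso⟩

open scoped Classical in
theorem pairingOfCut_cutOfPairing (y : Σ P, MDIso (pairingGraph Γ b hnl P) G) :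
    pairingOfCut hnl (cutOfPairing y) = y := by
  obtain ⟨P, φ⟩ := y
  set ψ := φ.toCutIso
  have h_uncut : ψ.uncutEquiv = φ.uncutEquiv := Equiv.ext fun _ => rfl
  have h_outward : ψ.outwardEquiv = φ.outwardEquiv := Equiv.ext fun _ => rfl
  have h_inward : ψ.inwardEquiv = φ.outwardEquiv.trans P := Equiv.ext fun _ => rfl
  refine sigma_pairingIso_ext ?_ ?_ ?_
  · show ψ.outwardEquiv.symm.trans ψ.inwardEquiv = P
    ext o
    simp [h_outward, h_inward]
  · show (Equiv.optionSubtype b ((Equiv.optionSubtype b).symm φ.onV.symm)).symm = φ.onV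
    rw [Equiv.apply_symm_apply, Equiv.symm_symm]
  · show ψ.edgeEquiv = φ.onE
    ext (f | o)
    · obtain ⟨e, rfl⟩ := φ.uncutEquiv.surjective f
      rw [← h_uncut, ψ.edgeEquiv_inl_uncutEquiv, h_uncut, φ.onE_inl_uncutEquiv]
    · obtain ⟨e, rfl⟩ := φ.outwardEquiv.surjective o
      rw [← h_outward, ψ.edgeEquiv_inr_outwardEquiv, h_outward, φ.onE_inr_outwardEquiv]

open scoped Classical in
theorem pairingOfCut_injective : Injective (pairingOfCut (G := G) hnl) := by
  rintro ⟨C, ψ⟩ ⟨C', ψ'⟩ h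
  have hP : ψ.pairing = ψ'.pairing := congrArg Sigma.fst h
  have hV : ψ.vertexEquiv = ψ'.vertexEquiv := congrArg (fun x => x.2.onV) h
  have hE : ψ.edgeEquiv = ψ'.edgeEquiv := congrArg (fun x => x.2.onE) h
  obtain rfl : C = C' := by
    ext e
    rw [← ψ.isRight_edgeEquiv_symm, ← ψ'.isRight_edgeEquiv_symm, hE]
  have h_uncut : ∀ e, ψ.uncutEquiv e = ψ'.uncutEquiv e := fun e => by
    have h := congrArg (· e.1) (congrArg Equiv.symm hE)
    simp only [ψ.edgeEquiv_symm_of_notMem e.2, ψ'.edgeEquiv_symm_of_notMem e.2] at h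
    exact Sum.inl_injective h
  have h_outward : ∀ e, ψ.outwardEquiv e = ψ'.outwardEquiv e := fun e => by
    have h := congrArg (· e.1) (congrArg Equiv.symm hE)
    simp only [ψ.edgeEquiv_symm_of_mem e.2, ψ'.edgeEquiv_symm_of_mem e.2] at h
    exact Sum.inr_injective h
  refine congrArg (Sigma.mk C) (PMDIso.ext ?_ ?_)
  · have h := congrArg Equiv.symm hV
    simp only [PMDIso.vertexEquiv, Equiv.symm_symm] at h
    exact congrArg Subtype.val ((Equiv.optionSubtype b).injective h)
  · ext (e | e | e)
    · exact congrArg Subtype.val (h_uncut e)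
    · exact congrArg Subtype.val (h_outward e)
    · have h_inward : ψ.inwardEquiv e = ψ'.inwardEquiv e := by
        rw [← ψ.pairing_outwardEquiv, ← ψ'.pairing_outwardEquiv, hP, h_outward]
      exact congrArg Subtype.val h_inward

variable (G hnl) in
noncomputable def cutEquivPairing :
    (Σ C : Set E, PMDIso (cutGraph G C) none Γ b) ≃
      Σ P, MDIso (pairingGraph Γ b hnl P) G where
  toFun := pairingOfCut hnl
  invFun := cutOfPairing
  left_inv _ := pairingOfCut_injective (pairingOfCut_cutOfPairing _)
  right_inv := pairingOfCut_cutOfPairing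

end CutAndPair

theorem pairing_cutting_count_general {V E W F : Type*} [Fintype V] [Fintype E] [Fintype W] [Fintype F]
    (G : Multidigraph V E) (Γ : Multidigraph W F) (b : W)
    (hnl : ∀ e, ¬ (Γ.src e = b ∧ Γ.tgt e = b)) :
    (Nat.card {P : {e : F // Γ.tgt e = b} ≃ {e : F // Γ.src e = b} //
        Nonempty (MDIso (pairingGraph Γ b hnl P) G)} : ℚ) /
      (Nat.card (PMDIso Γ b Γ b) : ℚ) =
    (Nat.card {C : Set E // Nonempty (PMDIso (cutGraph G C) (none : Option V) Γ b)} : ℚ) /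
      (Nat.card (MDIso G G) : ℚ) := by
  have h_pairing := Nat.card_sigma_of_equiv_of_nonempty
    fun P (h : Nonempty (MDIso (pairingGraph Γ b hnl P) G)) => h.some.equivAut
  have h_cut := Nat.card_sigma_of_equiv_of_nonempty
    fun C (h : Nonempty (PMDIso (cutGraph G C) none Γ b)) => h.some.equivAut
  have h_count := Nat.card_congr (cutEquivPairing G hnl)
  rw [h_cut, h_pairing] at h_count
  rw [div_eq_div_iff (Nat.cast_ne_zero.2 Nat.card_pos.ne') (Nat.cast_ne_zero.2 Nat.card_pos.ne')]
  exact_mod_cast h_count.symm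

/-- Lemma 2.10 of Liu–Xu: for a pointed graph `Γ` with no loops at `•` and
`deg⁺(•) = deg⁻(•) = m`, and any graph `G`,
`#{P ∈ 𝒫(Γ) ∣ G_P ≅ G} / |Aut Γ| = #{C ∈ 𝒞(G) ∣ Γ_C ≅ Γ} / |Aut G|`. -/
theorem pairing_cutting_count {V E W F : Type*} [Fintype V] [Fintype E] [Fintype W] [Fintype F]
    (G : Multidigraph V E) (Γ : Multidigraph W F) (b : W) (m : ℕ)
    (hnl : ∀ e, ¬ (Γ.src e = b ∧ Γ.tgt e = b))
    (hout : Nat.card {e : F // Γ.src e = b} = m)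
    (hin : Nat.card {e : F // Γ.tgt e = b} = m) :
    (Nat.card {P : {e : F // Γ.tgt e = b} ≃ {e : F // Γ.src e = b} //
        Nonempty (MDIso (pairingGraph Γ b hnl P) G)} : ℚ) /
      (Nat.card (PMDIso Γ b Γ b) : ℚ) =
    (Nat.card {C : Set E // Nonempty (PMDIso (cutGraph G C) (none : Option V) Γ b)} : ℚ) /
      (Nat.card (MDIso G G) : ℚ) :=
  pairing_cutting_count_general G Γ b hnl
end

section
/- Define $\tilde{z}(G) = \sum_{C \in \mathscr{C}(G)} \frac{(-1)^{\mathfrak{m}(C)} \varphi(\Gamma_C)}{(\mathfrak{m}(C) + w(G))!}$ for a directed multigraph $G$, where $\mathscr{C}(G)$ is the set of subsets of edges of $G$, $\mathfrak{m}(C) = |C|$, and $w(G) = |E(G)| - |V(G)|$. If $G_1$ and $G_2$ are directed multigraphs and the invariant $\varphi$ satisfies $\varphi(\Gamma_{C_1 \times C_2}) = \binom{\mathfrak{m}(C_1) + \mathfrak{m}(C_2) + w(G_1) + w(G_2)}{\mathfrak{m}(C_1) + w(G_1)} \varphi(\Gamma_{C_1}) \varphi(\Gamma_{C_2})$ for all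 edge-cuttings $C_1$ of $G_1$ and $C_2$ of $G_2$, then $\tilde{z}(G_1 \cup G_2) = \tilde{z}(G_1) \tilde{z}(G_2)$, where $G_1 \cup G_2$ is the disjoint union. -/
open Finset

open Nat in
theorem Nat.cast_add_choose_div_factorial (K : Type*) [Field K] [CharZero K] (a b : ℕ) :
    ((a + b).choose a : K) / (a + b)! = ((a ! : K) * b !)⁻¹ := by
  have hab : ((a + b)! : K) ≠ 0 := Nat.cast_ne_zero.2 (factorial_ne_zero _)
  rw [Nat.cast_add_choose, div_div_cancel_left' hab]

theorem ztilde_multiplicative_general {E₁ E₂ : Type*} [Fintype E₁] [Fintype E₂]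
    (w₁ w₂ : ℕ)
    (φ₁ : Finset E₁ → ℕ) (φ₂ : Finset E₂ → ℕ) (φ₁₂ : Finset E₁ → Finset E₂ → ℕ)
    (hφ : ∀ C₁ : Finset E₁, ∀ C₂ : Finset E₂,
      φ₁₂ C₁ C₂ =
        (C₁.card + C₂.card + w₁ + w₂).choose (C₁.card + w₁) * (φ₁ C₁ * φ₂ C₂)) :
    (∑ C₁ : Finset E₁, ∑ C₂ : Finset E₂,
        (-1 : ℚ) ^ (C₁.card + C₂.card) * (φ₁₂ C₁ C₂ : ℚ) /
          (Nat.factorial (C₁.card + C₂.card + (w₁ + w₂)) : ℚ)) =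
      (∑ C₁ : Finset E₁,
          (-1 : ℚ) ^ C₁.card * (φ₁ C₁ : ℚ) / (Nat.factorial (C₁.card + w₁) : ℚ)) *
      (∑ C₂ : Finset E₂,
          (-1 : ℚ) ^ C₂.card * (φ₂ C₂ : ℚ) / (Nat.factorial (C₂.card + w₂) : ℚ)) := by
  rw [sum_mul_sum]
  refine sum_congr rfl fun C₁ _ => sum_congr rfl fun C₂ _ => ?_
  set a := C₁.card + w₁
  set b := C₂.card + w₂
  have hdenom : C₁.card + C₂.card + (w₁ + w₂) = a + b := by omega
  have hbinom : C₁.card + C₂.card + w₁ + w₂ = a + b := by omega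
  rw [hφ, hdenom, hbinom]
  push_cast
  calc _ = (-1) ^ C₁.card * (-1) ^ C₂.card * (φ₁ C₁ : ℚ) * φ₂ C₂ *
          (((a + b).choose a : ℚ) / (a + b).factorial) := by ring
    _ = _ := by rw [Nat.cast_add_choose_div_factorial]; ring

/-- Multiplicativity of `z̃` under disjoint union (Proposition 2.13 of Liu–Xu).
Edge-cuttings of a graph with (finite) edge type `E` are identified with `Finset E`;
cuttings of the disjoint union `G₁ ∪ G₂` are pairs of cuttings, `𝔪(C) = |C|`, weights add,
and the invariant `φ` of the associated pointed graphs satisfies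
`φ(Γ_{C₁×C₂}) = C(𝔪(C₁)+𝔪(C₂)+w₁+w₂, 𝔪(C₁)+w₁) φ(Γ_{C₁}) φ(Γ_{C₂})`.
Then `z̃(G₁ ∪ G₂) = z̃(G₁) z̃(G₂)`. -/
theorem ztilde_multiplicative {E₁ E₂ : Type*} [Fintype E₁] [Fintype E₂]
    [DecidableEq E₁] [DecidableEq E₂] (w₁ w₂ : ℕ)
    (φ₁ : Finset E₁ → ℕ) (φ₂ : Finset E₂ → ℕ) (φ₁₂ : Finset E₁ → Finset E₂ → ℕ)
    (hφ : ∀ C₁ : Finset E₁, ∀ C₂ : Finset E₂,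
      φ₁₂ C₁ C₂ =
        (C₁.card + C₂.card + w₁ + w₂).choose (C₁.card + w₁) * (φ₁ C₁ * φ₂ C₂)) :
    (∑ C₁ : Finset E₁, ∑ C₂ : Finset E₂,
        (-1 : ℚ) ^ (C₁.card + C₂.card) * (φ₁₂ C₁ C₂ : ℚ) /
          (Nat.factorial (C₁.card + C₂.card + (w₁ + w₂)) : ℚ)) =
      (∑ C₁ : Finset E₁,
          (-1 : ℚ) ^ C₁.card * (φ₁ C₁ : ℚ) / (Nat.factorial (C₁.card + w₁) : ℚ)) *
      (∑ C₂ : Finset E₂,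
          (-1 : ℚ) ^ C₂.card * (φ₂ C₂ : ℚ) / (Nat.factorial (C₂.card + w₂) : ℚ)) :=
  ztilde_multiplicative_general w₁ w₂ φ₁ φ₂ φ₁₂ hφ
end

section
/- Every strongly connected directed multigraph in which every non-distinguished vertex is semistable (in-degree $\geq 1$, out-degree $\geq 1$, total degree $\geq 3$) and which has at least two vertices admits a strong reduction: a sequence of steps, each removing a redundant edge or smoothing out an ordinary vertex of in- and out-degree 1, terminating in the single distinguished vertex $\bullet$; moreover, every strong reduction of a graph $\Gamma$ removes exactly $w(\Gamma) = |E(\Gamma)| - |V(\Gamma)|$ edges. -/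
/-- A concrete finite directed multigraph: vertices and edges are finite sets of naturals,
with source and target maps. -/
structure MG where
  V : Finset ℕ
  E : Finset ℕ
  src : ℕ → ℕ
  tgt : ℕ → ℕ

namespace MG

/-- Reachability along directed edges of `G`. -/
def Reach (G : MG) (u v : ℕ) : Prop :=
  Relation.ReflTransGen (fun a b => ∃ e ∈ G.E, G.src e = a ∧ G.tgt e = b) u v

/-- `G` is strongly connected. -/
def StronglyConnected (G : MG) : Prop :=
  ∀ u ∈ G.V, ∀ v ∈ G.V, G.Reach u v

def indeg (G : MG) (v : ℕ) : ℕ := (G.E.filter (fun e => G.tgt e = v)).card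

def outdeg (G : MG) (v : ℕ) : ℕ := (G.E.filter (fun e => G.src e = v)).card

/-- All edges of `G` have endpoints in `G.V`. -/
def WellFormed (G : MG) : Prop := ∀ e ∈ G.E, G.src e ∈ G.V ∧ G.tgt e ∈ G.V

/-- One step removing a redundant edge `e`: the removal keeps the graph strongly connected. -/
def RemoveStep (G G' : MG) : Prop :=
  ∃ e ∈ G.E, G'.V = G.V ∧ G'.E = G.E.erase e ∧
    (∀ f ∈ G'.E, G'.src f = G.src f ∧ G'.tgt f = G.tgt f) ∧
    G'.StronglyConnected

/-- One step smoothing out an ordinary vertex `v` with `deg⁺(v) = deg⁻(v) = 1`: remove `v`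
together with its unique incoming edge `ein` and outgoing edge `eout`, and join the two
neighbours by a single new edge `enew`. -/
def SmoothStep (b : ℕ) (G G' : MG) : Prop :=
  ∃ v ∈ G.V, v ≠ b ∧ G.indeg v = 1 ∧ G.outdeg v = 1 ∧
    ∃ ein ∈ G.E, ∃ eout ∈ G.E, G.tgt ein = v ∧ G.src eout = v ∧ ein ≠ eout ∧
      ∃ enew ∉ G.E,
        G'.V = G.V.erase v ∧ G'.E = insert enew ((G.E.erase ein).erase eout) ∧
        G'.src enew = G.src ein ∧ G'.tgt enew = G.tgt eout ∧
        (∀ f ∈ (G.E.erase ein).erase eout, G'.src f = G.src f ∧ G'.tgt f = G.tgt f)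

/-- `Red b G k` : there is a strong reduction of the pointed graph `(G, b)` down to the single
distinguished vertex `b` with no edges, in which exactly `k` (redundant-)edge-removal steps
are performed (smoothing steps are not counted). -/
inductive Red (b : ℕ) : MG → ℕ → Prop
  | refl (G : MG) (hV : G.V = {b}) (hE : G.E = ∅) : Red b G 0
  | removal (G G' : MG) (k : ℕ) (h : RemoveStep G G') (hr : Red b G' k) : Red b G (k + 1)
  | smooth (G G' : MG) (k : ℕ) (h : SmoothStep b G G') (hr : Red b G' k) : Red b G k

/-!
Read backwards, a strong reduction rebuilds the graph from the single vertex `b` by adding an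
edge between existing vertices (undoing the removal of a redundant edge) and by subdividing an
edge (undoing a smoothing). Every strongly connected graph is rebuilt in this way along an ear
decomposition: take an edge leaving the part built so far and a simple path from its head back
into that part; the whole ear is first added as a single new arc, which is then subdivided
vertex by vertex, from the end of the ear backwards. Strong connectivity is kept at each stage,
so the reversed construction is a strong reduction.

The count is invariant: a removal lowers `|E| - |V|` by one, a smoothing preserves it, and the
final graph has `|E| - |V| = -1`.
-/

section

def Adj (G : MG) (u w : ℕ) : Prop := ∃ e ∈ G.E, G.src e = u ∧ G.tgt e = w

theorem reach_mono {G G' : MG}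
    (h : ∀ e ∈ G.E, e ∈ G'.E ∧ G.src e = G'.src e ∧ G.tgt e = G'.tgt e) {u w : ℕ}
    (hr : G.Reach u w) : G'.Reach u w :=
  Relation.ReflTransGen.mono (fun _ _ ⟨e, he, hs, ht⟩ =>
    ⟨e, (h e he).1, (h e he).2.1 ▸ hs, (h e he).2.2 ▸ ht⟩) _ _ hr

structure Reducible (b : ℕ) (G : MG) : Prop where
  wellFormed : G.WellFormed
  mem : b ∈ G.V
  stronglyConnected : G.StronglyConnected
  red : ∃ k, Red b G k

variable {b : ℕ} {G G' : MG}

theorem Reducible.point (hV : G.V = {b}) (hE : G.E = ∅) : Reducible b G where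
  wellFormed e he := by simp [hE] at he
  mem := by simp [hV]
  stronglyConnected u hu w hw := by
    rw [hV, Finset.mem_singleton] at hu hw
    rw [hu, hw]
    exact .refl
  red := ⟨0, .refl G hV hE⟩

theorem Reducible.of_removeStep (h : RemoveStep G G') (h' : Reducible b G')
    (hwf : G.WellFormed) : Reducible b G := by
  obtain ⟨e, -, hV, hE, hagree, -⟩ := id h
  refine ⟨hwf, hV ▸ h'.mem, fun u hu w hw => reach_mono (fun f hf => ?_)
    (h'.stronglyConnected u (hV ▸ hu) w (hV ▸ hw)), ?_⟩
  · exact ⟨Finset.mem_of_mem_erase (hE ▸ hf), hagree f hf⟩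
  · obtain ⟨k, hk⟩ := h'.red
    exact ⟨k + 1, .removal G G' k h hk⟩

theorem Reducible.of_smoothStep (h : SmoothStep b G G') (h' : Reducible b G') :
    Reducible b G := by
  obtain ⟨v, hv, -, -, -, ein, hein, eout, heout, htin, hsout, -, enew, -, hV, hE, hsnew, htnew,
    hagree⟩ := id h
  have hVsub : G'.V ⊆ G.V := hV ▸ Finset.erase_subset v G.V
  have hnew : enew ∈ G'.E := hE ▸ Finset.mem_insert_self _ _
  have hold : ∀ f ∈ (G.E.erase ein).erase eout, f ∈ G'.E := fun f hf =>
    hE ▸ Finset.mem_insert_of_mem hf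
  have hsin : G.src ein ∈ G'.V := hsnew ▸ (h'.wellFormed enew hnew).1
  have htout : G.tgt eout ∈ G'.V := htnew ▸ (h'.wellFormed enew hnew).2
  -- the new edge of `G'` is the path `ein, eout` through `v` in `G`
  have lift : ∀ u w, G'.Reach u w → G.Reach u w := by
    refine Relation.reflTransGen_closed ?_
    rintro _ _ ⟨f, hf, rfl, rfl⟩
    by_cases hfn : f = enew
    · subst hfn
      rw [hsnew, htnew]
      exact .head ⟨ein, hein, rfl, htin⟩ (.single ⟨eout, heout, hsout, rfl⟩)
    · have hf' : f ∈ (G.E.erase ein).erase eout := by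
        rw [hE] at hf
        exact (Finset.mem_insert.1 hf).resolve_left hfn
      rw [(hagree f hf').1, (hagree f hf').2]
      exact .single ⟨f, Finset.mem_of_mem_erase (Finset.mem_of_mem_erase hf'), rfl, rfl⟩
  have hV' : ∀ u ∈ G.V, u ≠ v → u ∈ G'.V := fun u hu huv => hV ▸ Finset.mem_erase.2 ⟨huv, hu⟩
  have into : ∀ u ∈ G.V, G.Reach u v := by
    intro u hu
    by_cases huv : u = v
    · exact huv ▸ .refl
    · exact .tail (lift _ _ (h'.stronglyConnected u (hV' u hu huv) _ hsin))
        ⟨ein, hein, rfl, htin⟩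
  have out : ∀ w ∈ G.V, G.Reach v w := by
    intro w hw
    by_cases hwv : w = v
    · exact hwv ▸ .refl
    · exact .head ⟨eout, heout, hsout, rfl⟩
        (lift _ _ (h'.stronglyConnected _ htout w (hV' w hw hwv)))
  refine ⟨fun f hf => ?_, hVsub h'.mem, fun u hu w hw => (into u hu).trans (out w hw), ?_⟩
  · by_cases hfin : f = ein
    · exact hfin ▸ ⟨hVsub hsin, htin ▸ hv⟩
    by_cases hfout : f = eout
    · exact hfout ▸ ⟨hsout ▸ hv, hVsub htout⟩
    have hf' : f ∈ (G.E.erase ein).erase eout :=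
      Finset.mem_erase.2 ⟨hfout, Finset.mem_erase.2 ⟨hfin, hf⟩⟩
    rw [← (hagree f hf').1, ← (hagree f hf').2]
    exact ⟨hVsub (h'.wellFormed f (hold f hf')).1, hVsub (h'.wellFormed f (hold f hf')).2⟩
  · obtain ⟨k, hk⟩ := h'.red
    exact ⟨k, .smooth G G' k h hk⟩

@[simps]
def addArc (G : MG) (e x y : ℕ) : MG :=
  ⟨G.V, insert e G.E, Function.update G.src e x, Function.update G.tgt e y⟩

variable {e x y : ℕ}

theorem addArc_self (G : MG) (e : ℕ) :
    G.addArc e (G.src e) (G.tgt e) = { G with E := insert e G.E } := by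
  simp [addArc]

theorem WellFormed.addArc (hwf : G.WellFormed) (hx : x ∈ G.V) (hy : y ∈ G.V) :
    (G.addArc e x y).WellFormed := by
  intro f hf
  by_cases hfe : f = e
  · subst hfe
    simpa using ⟨hx, hy⟩
  · simpa [hfe] using hwf f ((Finset.mem_insert.1 hf).resolve_left hfe)

theorem WellFormed.of_addArc (hwf : (G.addArc e x y).WellFormed) (he : e ∉ G.E) :
    G.WellFormed ∧ x ∈ G.V ∧ y ∈ G.V := by
  refine ⟨fun f hf => ?_, ?_⟩
  · have hfe : f ≠ e := fun h => he (h ▸ hf)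
    simpa [hfe] using hwf f (Finset.mem_insert_of_mem hf)
  · simpa using hwf e (Finset.mem_insert_self _ _)

theorem removeStep_addArc (hsc : G.StronglyConnected) (he : e ∉ G.E) :
    RemoveStep (G.addArc e x y) G := by
  refine ⟨e, Finset.mem_insert_self _ _, rfl, (Finset.erase_insert he).symm, fun f hf => ?_, hsc⟩
  have hfe : f ≠ e := fun h => he (h ▸ hf)
  simp [hfe]

theorem Reducible.addArc (h : Reducible b G) (he : e ∉ G.E) (hx : x ∈ G.V) (hy : y ∈ G.V) :
    Reducible b (G.addArc e x y) :=
  .of_removeStep (removeStep_addArc h.stronglyConnected he) h (h.wellFormed.addArc hx hy)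

variable {H : MG} {f T U : ℕ}

/-- Subdividing the arc `U : x → tgt f` at the new vertex `src f` into `T : x → src f` followed
by `f` is an inverse smoothing step. -/
theorem smoothStep_addArc (hwf : H.WellFormed) (hb : b ∈ H.V) (hx : x ∈ H.V)
    (ha : H.tgt f ∈ H.V) (hc : H.src f ∉ H.V) (hf : f ∉ H.E) (hT : T ∉ insert f H.E)
    (hU : U ∉ insert T (insert f H.E)) :
    SmoothStep b ({ H with V := insert (H.src f) H.V, E := insert f H.E }.addArc T x (H.src f))
      (H.addArc U x (H.tgt f)) := by
  have hTf : T ≠ f := fun h => hT (h ▸ Finset.mem_insert_self _ _)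
  have hTH : T ∉ H.E := fun h => hT (Finset.mem_insert_of_mem h)
  have hxc : x ≠ H.src f := fun h => hc (h ▸ hx)
  have hac : H.tgt f ≠ H.src f := fun h => hc (h ▸ ha)
  have hgc : ∀ g ∈ H.E, H.src g ≠ H.src f ∧ H.tgt g ≠ H.src f := fun g hg =>
    ⟨fun h => hc (h ▸ (hwf g hg).1), fun h => hc (h ▸ (hwf g hg).2)⟩
  have hne : ∀ g ∈ H.E, g ≠ T ∧ g ≠ U := fun g hg =>
    ⟨fun h => hTH (h ▸ hg), fun h => hU (h ▸ by simp [hg])⟩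
  have hrest : ((insert T (insert f H.E)).erase T).erase f = H.E := by
    rw [Finset.erase_insert hT, Finset.erase_insert hf]
  refine ⟨H.src f, by simp, fun h => hc (h ▸ hb), ?_, ?_, T, by simp, f, by simp, by simp,
    by simp [hTf.symm], hTf, U, hU, by simp [Finset.erase_insert hc],
    by simp only [addArc_E]; rw [hrest], by simp, by simp [hTf.symm], ?_⟩
  · refine Finset.card_eq_one.2 ⟨T, Finset.ext fun g => ?_⟩
    simp only [addArc_E, addArc_tgt, Finset.mem_filter, Finset.mem_insert,
      Finset.mem_singleton]
    constructor
    · rintro ⟨rfl | rfl | hg, hgt⟩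
      · rfl
      · simp [hTf.symm, hac] at hgt
      · simp [(hne g hg).1, (hgc g hg).2] at hgt
    · rintro rfl
      simp
  · refine Finset.card_eq_one.2 ⟨f, Finset.ext fun g => ?_⟩
    simp only [addArc_E, addArc_src, Finset.mem_filter, Finset.mem_insert,
      Finset.mem_singleton]
    constructor
    · rintro ⟨rfl | rfl | hg, hgs⟩
      · simp [hxc] at hgs
      · rfl
      · simp [(hne g hg).1, (hgc g hg).1] at hgs
    · rintro rfl
      simp [hTf.symm]
  · intro g hg
    simp only [addArc_E, hrest] at hg
    simp [(hne g hg).1, (hne g hg).2]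

/-- An ear built backwards from its end: `a` is its current first vertex, and a fresh arc from
any vertex of `X` to `a` completes `H` to a reducible graph. -/
def OpenEar (b : ℕ) (X : Finset ℕ) (H : MG) (a : ℕ) : Prop :=
  ∀ T ∉ H.E, ∀ x ∈ X, Reducible b (H.addArc T x a)

variable {X : Finset ℕ} {a : ℕ}

theorem Reducible.openEar (h : Reducible b H) (hX : X ⊆ H.V) (ha : a ∈ H.V) :
    OpenEar b X H a :=
  fun _ hT _ hx => h.addArc hT (hX hx) ha

theorem OpenEar.extend (h : OpenEar b X H (H.tgt f)) (hf : f ∉ H.E) (hc : H.src f ∉ H.V) :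
    OpenEar b X { H with V := insert (H.src f) H.V, E := insert f H.E } (H.src f) := by
  intro T hT x hx
  obtain ⟨U, hU⟩ := Infinite.exists_notMem_finset (insert T (insert f H.E))
  have hUH : U ∉ H.E := fun h => hU (by simp [h])
  have hred := h U hUH x hx
  obtain ⟨hwf, hxH, ha⟩ := hred.wellFormed.of_addArc hUH
  exact hred.of_smoothStep (smoothStep_addArc hwf hred.mem hxH ha hc hf hT hU)

theorem OpenEar.close (h : OpenEar b X H (H.tgt e)) (he : e ∉ H.E) (hx : H.src e ∈ X) :
    Reducible b { H with E := insert e H.E } :=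
  addArc_self H e ▸ h e he _ hx

def restrict (G : MG) (V E : Finset ℕ) : MG := { G with V := V, E := E }

def ReachVia (G : MG) (S : Finset ℕ) : ℕ → ℕ → Prop :=
  Relation.ReflTransGen fun u w => u ∈ S ∧ G.Adj u w

variable {V E S : Finset ℕ} {c t : ℕ}

/-- Cut the walk at its last visit of `a`. -/
theorem ReachVia.erase_or (h : G.ReachVia S c t) (a : ℕ) :
    G.ReachVia (S.erase a) c t ∨ ∃ d, G.Adj a d ∧ G.ReachVia (S.erase a) d t := by
  induction h using Relation.ReflTransGen.head_induction_on with
  | refl => exact .inl .refl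
  | @head c c' hstep _ ih =>
    obtain ⟨hc, hadj⟩ := hstep
    by_cases hca : c = a
    · subst hca
      exact .inr (ih.elim (fun h => ⟨c', hadj, h⟩) id)
    · exact ih.imp_left fun h => .head ⟨Finset.mem_erase.2 ⟨hca, hc⟩, hadj⟩ h

theorem ReachVia.exists_adj (h : G.ReachVia S a t) (hat : a ≠ t) :
    a ∈ S ∧ ∃ d, G.Adj a d ∧ G.ReachVia (S.erase a) d t := by
  have haS : a ∈ S := by
    obtain rfl | ⟨_, ⟨haS, -⟩, -⟩ := Relation.ReflTransGen.cases_head h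
    · exact absurd rfl hat
    · exact haS
  refine ⟨haS, (h.erase_or a).resolve_left fun h' => ?_⟩
  obtain rfl | ⟨_, ⟨ha, -⟩, -⟩ := Relation.ReflTransGen.cases_head h'
  · exact hat rfl
  · simp at ha

theorem Reach.exists_reachVia (hwf : G.WellFormed) (h : G.Reach a t) (ha : a ∈ G.V)
    (ht : t ∈ V) : ∃ t' ∈ V, G.ReachVia (G.V \ V) a t' := by
  revert ha
  induction h using Relation.ReflTransGen.head_induction_on with
  | refl => exact fun _ => ⟨_, ht, .refl⟩
  | head hstep _ ih =>
    obtain ⟨e, he, rfl, rfl⟩ := hstep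
    intro ha
    by_cases haV : G.src e ∈ V
    · exact ⟨_, haV, .refl⟩
    · obtain ⟨t', ht', h'⟩ := ih (hwf e he).2
      exact ⟨t', ht', .head ⟨Finset.mem_sdiff.2 ⟨ha, haV⟩, e, he, rfl, rfl⟩ h'⟩

variable {Γ : MG}

theorem exists_openEar (hred : Reducible b (Γ.restrict V E)) (ht : t ∈ V) (S : Finset ℕ)
    (hS : Disjoint S V) (a : ℕ) (ha : Γ.ReachVia S a t) :
    ∃ V' E', V' ⊆ V ∪ S ∧ E ⊆ E' ∧ E' ⊆ E ∪ Γ.E.filter (fun g => Γ.src g ∈ S) ∧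
      OpenEar b V (Γ.restrict V' E') a := by
  -- removing `a` from `S` keeps the ear simple
  induction S using Finset.strongInduction generalizing a with
  | H S ih =>
  by_cases haV : a ∈ V
  · exact ⟨V, E, Finset.subset_union_left, subset_rfl, Finset.subset_union_left,
      hred.openEar subset_rfl haV⟩
  obtain ⟨haS, d, ⟨f, hf, rfl, rfl⟩, hd⟩ := ha.exists_adj fun h => haV (h ▸ ht)
  obtain ⟨Vd, Ed, hVd, hEd, hEd', hear⟩ := ih (S.erase (Γ.src f)) (Finset.erase_ssubset haS)
    (Finset.disjoint_of_subset_left (Finset.erase_subset _ _) hS) _ hd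
  have haVd : Γ.src f ∉ Vd := fun h => by simpa [haV] using hVd h
  have hfEd : f ∉ Ed := fun h => by
    rcases Finset.mem_union.1 (hEd' h) with h | h
    · exact haV (hred.wellFormed f h).1
    · simp at h
  refine ⟨insert (Γ.src f) Vd, insert f Ed, ?_, hEd.trans (Finset.subset_insert _ _), ?_,
    OpenEar.extend (H := Γ.restrict Vd Ed) hear hfEd haVd⟩
  · refine Finset.insert_subset (Finset.mem_union_right _ haS) (hVd.trans ?_)
    exact Finset.union_subset_union_right (Finset.erase_subset _ _)
  · refine Finset.insert_subset (by simp [hf, haS]) (hEd'.trans ?_)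
    refine Finset.union_subset_union_right fun g => ?_
    simp only [Finset.mem_filter]
    exact And.imp_right Finset.mem_of_mem_erase

theorem exists_reducible_insert (hwf : Γ.WellFormed) (hsc : Γ.StronglyConnected)
    (hV : V ⊆ Γ.V) (hE : E ⊆ Γ.E) (hred : Reducible b (Γ.restrict V E)) (he : e ∈ Γ.E)
    (heE : e ∉ E) (hsrc : Γ.src e ∈ V) :
    ∃ V' E', V' ⊆ Γ.V ∧ insert e E ⊆ E' ∧ E' ⊆ Γ.E ∧ Reducible b (Γ.restrict V' E') := by
  obtain ⟨t, ht, hreach⟩ :=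
    (hsc _ (hwf e he).2 b (hV hred.mem)).exists_reachVia hwf (hwf e he).2 hred.mem
  obtain ⟨V', E', hV', hEE', hE', hear⟩ :=
    exists_openEar hred ht (Γ.V \ V) Finset.sdiff_disjoint _ hreach
  have heE' : e ∉ E' := fun h => by
    rcases Finset.mem_union.1 (hE' h) with h | h
    · exact heE h
    · simp [hsrc] at h
  refine ⟨V', insert e E', ?_, Finset.insert_subset_insert _ hEE', ?_, hear.close heE' hsrc⟩
  · simpa [Finset.union_sdiff_of_subset hV] using hV'
  · exact Finset.insert_subset he (hE'.trans (Finset.union_subset hE (Finset.filter_subset _ _)))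

theorem eq_of_forall_src_mem (hwf : Γ.WellFormed) (hsc : Γ.StronglyConnected) (hb : b ∈ V)
    (hV : V ⊆ Γ.V) (hE : E ⊆ Γ.E) (hwfVE : (Γ.restrict V E).WellFormed)
    (hclosed : ∀ e ∈ Γ.E, Γ.src e ∈ V → e ∈ E) : V = Γ.V ∧ E = Γ.E := by
  have hVeq : V = Γ.V := by
    refine hV.antisymm fun v hv => ?_
    have hreach := hsc b (hV hb) v hv
    clear hv
    induction hreach with
    | refl => exact hb
    | tail _ hstep ih =>
      obtain ⟨e, he, rfl, rfl⟩ := hstep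
      exact (hwfVE e (hclosed e he ih)).2
  exact ⟨hVeq, hE.antisymm fun e he => hclosed e he (hVeq ▸ (hwf e he).1)⟩

theorem reducible_of_restrict {V E : Finset ℕ} (hwf : Γ.WellFormed)
    (hsc : Γ.StronglyConnected) (hV : V ⊆ Γ.V) (hE : E ⊆ Γ.E)
    (h : Reducible b (Γ.restrict V E)) : Reducible b Γ := by
  by_cases hclosed : ∀ e ∈ Γ.E, Γ.src e ∈ V → e ∈ E
  · obtain ⟨hVeq, hEeq⟩ : V = Γ.V ∧ E = Γ.E :=
      eq_of_forall_src_mem hwf hsc h.mem hV hE h.wellFormed hclosed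
    have hΓ : Γ.restrict V E = Γ := by rw [hVeq, hEeq]; rfl
    exact hΓ ▸ h
  · push Not at hclosed
    obtain ⟨e, he, hsrc, heE⟩ := hclosed
    obtain ⟨V', E', hV', heE', hE', h'⟩ := exists_reducible_insert hwf hsc hV hE h he heE hsrc
    have : E.card < E'.card :=
      Finset.card_lt_card ((Finset.ssubset_insert heE).trans_subset heE')
    have := Finset.card_le_card hE'
    exact reducible_of_restrict hwf hsc hV' hE' h'
termination_by Γ.E.card - E.card

theorem Red.add_card_V_eq {k : ℕ} (h : Red b G k) : k + G.V.card = G.E.card + 1 := by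
  induction h with
  | refl G hV hE => simp [hV, hE]
  | removal G G' k h _ ih =>
    obtain ⟨e, he, hV, hE, -⟩ := h
    have := Finset.card_erase_add_one he
    rw [← hE, ← hV] at *
    omega
  | smooth G G' k h _ ih =>
    obtain ⟨v, hv, -, -, -, ein, hein, eout, heout, -, -, hne, enew, hnew, hV, hE, -⟩ := h
    have hV' := Finset.card_erase_add_one hv
    have hE₁ := Finset.card_erase_add_one hein
    have hE₂ := Finset.card_erase_add_one (Finset.mem_erase.2 ⟨hne.symm, heout⟩)
    have hE₃ : G'.E.card = ((G.E.erase ein).erase eout).card + 1 :=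
      hE ▸ Finset.card_insert_of_notMem fun h =>
        hnew (Finset.mem_of_mem_erase (Finset.mem_of_mem_erase h))
    rw [← hV] at hV'
    omega

end

theorem strong_reduction_exists_and_count_general (Γ : MG) (b : ℕ)
    (hwf : Γ.WellFormed) (hb : b ∈ Γ.V)
    (hsc : Γ.StronglyConnected) :
    (∃ k, Red b Γ k) ∧ (∀ k, Red b Γ k → k + Γ.V.card = Γ.E.card + 1) :=
  ⟨(reducible_of_restrict (V := {b}) (E := ∅) hwf hsc (by simpa) (Finset.empty_subset _)
    (.point rfl rfl)).red, fun _ => Red.add_card_V_eq⟩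

/-- Every strongly connected semistable pointed multidigraph with at least two vertices admits
a strong reduction, and every strong reduction of `Γ` removes exactly
`w(Γ) = |E(Γ)| - |V(Γ)|` edges (the vertex count excluding the distinguished vertex `b`). -/
theorem strong_reduction_exists_and_count (Γ : MG) (b : ℕ)
    (hwf : Γ.WellFormed) (hb : b ∈ Γ.V) (hV : 2 ≤ Γ.V.card)
    (hsemi : ∀ v ∈ Γ.V, v ≠ b →
      1 ≤ Γ.indeg v ∧ 1 ≤ Γ.outdeg v ∧ 3 ≤ Γ.indeg v + Γ.outdeg v)
    (hsc : Γ.StronglyConnected) :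
    (∃ k, Red b Γ k) ∧ (∀ k, Red b Γ k → k + Γ.V.card = Γ.E.card + 1) :=
  strong_reduction_exists_and_count_general Γ b hwf hb hsc

end MG
end
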